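/- arXiv:2403.14156 — 3 statements merged into one kernel-verified Lean document; each statement's English description precedes it below -/
import Mathlib

section
/- Multi-step greedy policies guarantee monotonic improvement: for any integer h ≥ 1, any policy π of a finite discounted MDP, and any h-step greedy policy π' ∈ 𝒢_h(V^π), it holds that V^{π'}(s) ≥ V^π(s) for every state s. -/
/-!
From `V^π = 𝒯^π V^π ≤ 𝒯 V^π` and monotonicity of `𝒯`, the iterates `𝒯^n V^π` increase in `n`.
Hence `W = 𝒯^{h-1} V^π` satisfies `V^π ≤ W` and `W ≤ 𝒯^h V^π = 𝒯^{π'} W`. Any `U ≤ 𝒯^{π'} U`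
lies below the fixed point `V^{π'}`: the largest excess `d = max (U - V^{π'})` satisfies
`d ≤ γ d`, so `d ≤ 0`.
-/

open Finset

noncomputable section

section Defs

variable {S A : Type*} [Fintype S] [Fintype A] [Nonempty A]

/-- Validity of a transition kernel: nonnegative rows summing to one. -/
def IsKernel (P : S → A → S → ℝ) : Prop :=
  ∀ s a, (∀ s', 0 ≤ P s a s') ∧ ∑ s', P s a s' = 1

/-- A policy assigns to each state a probability distribution over actions. -/
def IsPolicy (π : S → A → ℝ) : Prop :=
  ∀ s, π s ∈ stdSimplex ℝ A

/-- The relative interior of the probability simplex over `A`. -/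
def relintSimplex (A : Type*) [Fintype A] : Set (A → ℝ) :=
  {p | (∀ a, 0 < p a) ∧ ∑ a, p a = 1}

/-- A policy lying in the relative interior of the policy set. -/
def IsRelintPolicy (π : S → A → ℝ) : Prop :=
  ∀ s, π s ∈ relintSimplex A

/-- Expected Bellman operator `𝒯^π`. -/
def bellman (P : S → A → S → ℝ) (r : S → A → ℝ) (γ : ℝ)
    (π : S → A → ℝ) (V : S → ℝ) : S → ℝ :=
  fun s => ∑ a, π s a * (r s a + γ * ∑ s', P s a s' * V s')

/-- Bellman optimality operator `𝒯`. -/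
def bellmanOpt (P : S → A → S → ℝ) (r : S → A → ℝ) (γ : ℝ) (V : S → ℝ) : S → ℝ :=
  fun s => Finset.univ.sup' Finset.univ_nonempty
    (fun a => r s a + γ * ∑ s', P s a s' * V s')

/-- `h`-step lookahead action-value `Q_h^π`, given the value function `Vπ` of the policy:
`Q_h^π(s,a) = r(s,a) + γ Σ_{s'} P(s'|s,a) (𝒯^{h−1} V^π)(s')`. -/
def Qlook (P : S → A → S → ℝ) (r : S → A → ℝ) (γ : ℝ) (h : ℕ) (Vπ : S → ℝ) :
    S → A → ℝ :=
  fun s a => r s a + γ * ∑ s', P s a s' * ((bellmanOpt P r γ)^[h - 1] Vπ) s'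

/-- Set of `h`-step greedy policies with respect to `V`:
`𝒢_h(V) = {π : 𝒯^π 𝒯^{h−1} V = 𝒯^h V}`. -/
def greedySet (P : S → A → S → ℝ) (r : S → A → ℝ) (γ : ℝ) (h : ℕ) (V : S → ℝ) :
    Set (S → A → ℝ) :=
  {π | IsPolicy π ∧
    bellman P r γ π ((bellmanOpt P r γ)^[h - 1] V) = (bellmanOpt P r γ)^[h] V}

/-- Bregman divergence of a mirror map `φ`:
`D_φ(p,q) = φ(p) − φ(q) − ⟨∇φ(q), p − q⟩`. -/
def bregman (φ : (A → ℝ) → ℝ) (p q : A → ℝ) : ℝ :=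
  φ p - φ q - fderiv ℝ φ q (p - q)

/-- Mirror map of Legendre type (relative to the simplex as domain): strictly convex on the
simplex, differentiable on its relative interior, and essentially smooth (the gradient blows up
along any sequence in the relative interior converging to a boundary point). -/
def IsLegendre (φ : (A → ℝ) → ℝ) : Prop :=
  StrictConvexOn ℝ (stdSimplex ℝ A) φ ∧
  (∀ q ∈ relintSimplex A, DifferentiableAt ℝ φ q) ∧
  (∀ (q : ℕ → (A → ℝ)) (p : A → ℝ), (∀ n, q n ∈ relintSimplex A) →
    p ∈ stdSimplex ℝ A → p ∉ relintSimplex A →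
    Filter.Tendsto q Filter.atTop (nhds p) →
    Filter.Tendsto (fun n => ‖fderiv ℝ φ (q n)‖) Filter.atTop Filter.atTop)

/-- One PMD proximal step with stepsize `η` and action-value `Q`:
for every state `s`, `πk1 s` maximizes `p ↦ η ⟨Q(s,·), p⟩ − D_φ(p, πk(·|s))` over the simplex. -/
def PMDStep (φ : (A → ℝ) → ℝ) (η : ℝ) (Q : S → A → ℝ) (πk πk1 : S → A → ℝ) : Prop :=
  ∀ s, πk1 s ∈ stdSimplex ℝ A ∧
    ∀ p ∈ stdSimplex ℝ A,
      η * (∑ a, Q s a * p a) - bregman φ p (πk s) ≤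
        η * (∑ a, Q s a * πk1 s a) - bregman φ (πk1 s) (πk s)

/-- Set of policies maximizing `π ↦ M^π Q̂` (componentwise over states),
where `(M^π Q)(s) = Σ_a π(a|s) Q(s,a)`. -/
def greedySetQ (Qhat : S → A → ℝ) : Set (S → A → ℝ) :=
  {π | IsPolicy π ∧ ∀ s, ∀ p ∈ stdSimplex ℝ A,
    ∑ a, Qhat s a * p a ≤ ∑ a, Qhat s a * π s a}

/-- `‖min_{π ∈ G} D_φ(π, πk)‖∞`, the sup norm over states of the componentwise infimum of the
Bregman divergence over a set `G` of policies. -/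
def dtil [Nonempty S] (φ : (A → ℝ) → ℝ) (G : Set (S → A → ℝ)) (πk : S → A → ℝ) : ℝ :=
  ⨆ s : S, |⨅ π : G, bregman φ ((π : S → A → ℝ) s) (πk s)|

/-- Sup norm on `ℝ^S`. -/
def supNorm {S : Type*} [Fintype S] [Nonempty S] (V : S → ℝ) : ℝ := ⨆ s : S, |V s|

end Defs

section BellmanOperators

variable {S A : Type*} [Fintype S] [Fintype A]
  {P : S → A → S → ℝ} {r : S → A → ℝ} {γ : ℝ} {π : S → A → ℝ}

lemma bellman_monotone (hγ : 0 ≤ γ) (hP : IsKernel P) (hπ : IsPolicy π) :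
    Monotone (bellman P r γ π) := fun _ _ hUV s =>
  sum_le_sum fun a _ => mul_le_mul_of_nonneg_left
    (add_le_add_right (mul_le_mul_of_nonneg_left
      (sum_le_sum fun s' _ => mul_le_mul_of_nonneg_left (hUV s') ((hP s a).1 s')) hγ) _)
    ((hπ s).1 a)

lemma bellmanOpt_monotone [Nonempty A] (hγ : 0 ≤ γ) (hP : IsKernel P) :
    Monotone (bellmanOpt P r γ) := fun _ _ hUV s =>
  sup'_le _ _ fun a ha => le_sup'_of_le _ ha <|
    add_le_add_right (mul_le_mul_of_nonneg_left
      (sum_le_sum fun s' _ => mul_le_mul_of_nonneg_left (hUV s') ((hP s a).1 s')) hγ) _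

lemma bellman_le_bellmanOpt [Nonempty A] (hπ : IsPolicy π) (V : S → ℝ) :
    bellman P r γ π V ≤ bellmanOpt P r γ V := by
  intro s
  calc bellman P r γ π V s
      ≤ ∑ a, π s a * bellmanOpt P r γ V s :=
        sum_le_sum fun a ha => mul_le_mul_of_nonneg_left
          (le_sup' (fun a => r s a + γ * ∑ s', P s a s' * V s') ha) ((hπ s).1 a)
    _ = bellmanOpt P r γ V s := by rw [← sum_mul, (hπ s).2, one_mul]

lemma bellman_add_const (hP : IsKernel P) (hπ : IsPolicy π) (V : S → ℝ) (d : ℝ) (s : S) :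
    bellman P r γ π (fun t => V t + d) s = bellman P r γ π V s + γ * d := by
  simp only [bellman, mul_add, sum_add_distrib, ← sum_mul, fun a => (hP s a).2, one_mul, (hπ s).2,
    add_assoc]

lemma le_of_le_bellman (hγ0 : 0 ≤ γ) (hγ1 : γ < 1) (hP : IsKernel P) (hπ : IsPolicy π)
    {U V : S → ℝ} (hV : bellman P r γ π V = V) (hU : U ≤ bellman P r γ π U) : U ≤ V := by
  intro s
  have : Nonempty S := ⟨s⟩
  set d := univ.sup' univ_nonempty fun t => U t - V t
  have hd : ∀ t, U t - V t ≤ d := fun t => le_sup' (fun t => U t - V t) (mem_univ t)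
  have hdγ : d ≤ γ * d := sup'_le _ _ fun t _ => by
    have hshift := bellman_monotone (r := r) hγ0 hP hπ (show U ≤ fun t => V t + d from
      fun t => by linarith [hd t]) t
    rw [bellman_add_const hP hπ, hV] at hshift
    linarith [hU t]
  have hd0 : d ≤ 0 := by nlinarith
  linarith [hd s]

end BellmanOperators

theorem stmt1_general {S A : Type*} [Fintype S] [Fintype A] [Nonempty A]
    (P : S → A → S → ℝ) (r : S → A → ℝ) (γ : ℝ)
    (hP : IsKernel P)
    (hγ0 : 0 < γ) (hγ1 : γ < 1)
    (h : ℕ)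
    (π π' : S → A → ℝ) (hπ : IsPolicy π)
    (Vπ Vπ' : S → ℝ)
    (hVπ : bellman P r γ π Vπ = Vπ)
    (hVπ' : bellman P r γ π' Vπ' = Vπ')
    (hgreedy : π' ∈ greedySet P r γ h Vπ) :
    ∀ s, Vπ s ≤ Vπ' s := by
  obtain ⟨hπ', hgreedy⟩ := hgreedy
  have hVπ_le : Vπ ≤ bellmanOpt P r γ Vπ := hVπ.symm.trans_le (bellman_le_bellmanOpt hπ Vπ)
  have hiter : Monotone fun n => (bellmanOpt P r γ)^[n] Vπ :=
    (bellmanOpt_monotone hγ0.le hP).monotone_iterate_of_le_map hVπ_le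
  have hW : (bellmanOpt P r γ)^[h - 1] Vπ ≤ bellman P r γ π' ((bellmanOpt P r γ)^[h - 1] Vπ) :=
    hgreedy ▸ hiter (Nat.sub_le h 1)
  exact (hiter (Nat.zero_le (h - 1))).trans (le_of_le_bellman hγ0.le hγ1 hP hπ' hVπ' hW)

/-- monotonic improvement of `h`-step greedy policies:
if `π' ∈ 𝒢_h(V^π)` then `V^{π'} ≥ V^π` componentwise. -/
theorem stmt1 {S A : Type*} [Fintype S] [Nonempty S] [Fintype A] [Nonempty A]
    (P : S → A → S → ℝ) (r : S → A → ℝ) (γ : ℝ)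
    (hP : IsKernel P) (hr : ∀ s a, 0 ≤ r s a ∧ r s a ≤ 1)
    (hγ0 : 0 < γ) (hγ1 : γ < 1)
    (h : ℕ) (hh : 1 ≤ h)
    (π π' : S → A → ℝ) (hπ : IsPolicy π)
    (Vπ Vπ' : S → ℝ)
    (hVπ : bellman P r γ π Vπ = Vπ)
    (hVπ' : bellman P r γ π' Vπ' = Vπ')
    (hgreedy : π' ∈ greedySet P r γ h Vπ) :
    ∀ s, Vπ s ≤ Vπ' s :=
  stmt1_general P r γ hP hγ0 hγ1 h π π' hπ Vπ Vπ' hVπ hVπ' hgreedy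
end
end

section
/- Monotonic improvement of the PMD update: let π be a policy in the relative interior of the policy set, η > 0, and let π' be a policy such that for every state s, π'(·|s) maximizes p ↦ η ⟨Q^π(s,·), p⟩ − D_φ(p, π(·|s)) over the simplex Δ(𝒜). Then, componentwise in ℝ^𝒮, V^π ≤ 𝒯^{π'} V^π ≤ V^{π'}. -/
open Finset

noncomputable section

/-
Since `D_φ(π(·|s), π(·|s)) = 0` and Bregman divergences of a convex `φ` are nonnegative, comparing
the proximal objective at its maximizer `π'(·|s)` with its value at `π(·|s)` gives
`⟨Q^π(s,·), π(·|s)⟩ ≤ ⟨Q^π(s,·), π'(·|s)⟩`, i.e. `V^π = 𝒯^π V^π ≤ 𝒯^{π'} V^π`.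
For the second inequality, `𝒯^{π'}` is monotone and a `γ`-contraction from above: if
`V ≤ 𝒯^{π'} V` then the largest entry `M` of `V − V^{π'}` satisfies `M ≤ γ M`, so `V ≤ V^{π'}`,
and applying `𝒯^{π'}` once more yields `𝒯^{π'} V^π ≤ 𝒯^{π'} V^{π'} = V^{π'}`.
-/

section Convexity

variable {E : Type*} [NormedAddCommGroup E] [NormedSpace ℝ E] {s : Set E} {f : E → ℝ}
  {f' : E →L[ℝ] ℝ} {x y : E}

theorem ConvexOn.le_sub_of_hasFDerivAt (hf : ConvexOn ℝ s f) (hx : x ∈ s) (hy : y ∈ s)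
    (hd : HasFDerivAt f f' x) : f' (y - x) ≤ f y - f x := by
  have hline : ConvexOn ℝ (Set.Icc (0 : ℝ) 1) (f ∘ AffineMap.lineMap x y) :=
    (hf.comp_affineMap _).subset (fun _ ht => hf.1.lineMap_mem hx hy ht) (convex_Icc 0 1)
  have hderiv : HasDerivAt (f ∘ AffineMap.lineMap (k := ℝ) x y) (f' (y - x)) 0 := by
    refine HasFDerivAt.comp_hasDerivAt (0 : ℝ) ?_ AffineMap.hasDerivAt_lineMap
    simpa using hd
  simpa [slope] using hline.le_slope_of_hasDerivAt (Set.left_mem_Icc.2 zero_le_one)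
    (Set.right_mem_Icc.2 zero_le_one) zero_lt_one hderiv

end Convexity

theorem sum_mul_le_of_mem_stdSimplex {ι : Type*} [Fintype ι] {w g : ι → ℝ} {M : ℝ}
    (hw : w ∈ stdSimplex ℝ ι) (hg : ∀ i, g i ≤ M) : ∑ i, w i * g i ≤ M :=
  calc ∑ i, w i * g i ≤ ∑ i, w i * M :=
        sum_le_sum fun i _ => mul_le_mul_of_nonneg_left (hg i) (hw.1 i)
    _ = M := by rw [← sum_mul, hw.2, one_mul]

theorem mem_stdSimplex_of_mem_relintSimplex {A : Type*} [Fintype A] {p : A → ℝ}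
    (hp : p ∈ relintSimplex A) : p ∈ stdSimplex ℝ A :=
  ⟨fun a => (hp.1 a).le, hp.2⟩

@[simp]
theorem bregman_self {A : Type*} (φ : (A → ℝ) → ℝ) (p : A → ℝ) : bregman φ p p = 0 := by
  simp [bregman]

section Bregman

variable {A : Type*} [Fintype A] {φ : (A → ℝ) → ℝ} {p q : A → ℝ}

theorem bregman_nonneg {s : Set (A → ℝ)} (hφ : ConvexOn ℝ s φ) (hp : p ∈ s) (hq : q ∈ s)
    (hd : DifferentiableAt ℝ φ q) : 0 ≤ bregman φ p q :=
  sub_nonneg.2 (hφ.le_sub_of_hasFDerivAt hq hp hd.hasFDerivAt)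

theorem PMDStep.sum_mul_le_sum_mul {S : Type*} {η : ℝ}
    {Q π π' : S → A → ℝ} (hstep : PMDStep φ η Q π π') (hη : 0 < η)
    (hφ : ConvexOn ℝ (stdSimplex ℝ A) φ) {s : S} (hπ : π s ∈ stdSimplex ℝ A)
    (hd : DifferentiableAt ℝ φ (π s)) : ∑ a, Q s a * π s a ≤ ∑ a, Q s a * π' s a := by
  have hmax := (hstep s).2 (π s) hπ
  have hdiv := bregman_nonneg hφ (hstep s).1 hπ hd
  rw [bregman_self] at hmax
  exact le_of_mul_le_mul_left (by linarith) hη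

end Bregman

section Bellman

variable {S A : Type*} [Fintype S] [Fintype A] {P : S → A → S → ℝ} {r : S → A → ℝ} {γ : ℝ}
  {ρ : S → A → ℝ}

theorem sum_Qlook_one_mul_eq_bellman [Nonempty A] (P : S → A → S → ℝ) (r : S → A → ℝ) (γ : ℝ)
    (V : S → ℝ) (ρ : S → A → ℝ) (s : S) :
    ∑ a, Qlook P r γ 1 V s a * ρ s a = bellman P r γ ρ V s :=
  sum_congr rfl fun _ _ => mul_comm _ _

theorem bellman_sub_bellman_le (hP : IsKernel P) (hγ : 0 ≤ γ) (hρ : IsPolicy ρ) {V W : S → ℝ}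
    {M : ℝ} (hVW : ∀ s, V s - W s ≤ M) (s : S) :
    bellman P r γ ρ V s - bellman P r γ ρ W s ≤ γ * M := by
  have hdiff : bellman P r γ ρ V s - bellman P r γ ρ W s =
      γ * ∑ a, ρ s a * ∑ s', P s a s' * (V s' - W s') := by
    rw [bellman, bellman, ← sum_sub_distrib, mul_sum]
    refine sum_congr rfl fun a _ => ?_
    simp only [mul_sub, sum_sub_distrib]
    ring
  rw [hdiff]
  exact mul_le_mul_of_nonneg_left
    (sum_mul_le_of_mem_stdSimplex (hρ s) fun a => sum_mul_le_of_mem_stdSimplex (hP s a) hVW) hγ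

theorem le_of_le_bellman_of_bellman_eq (hP : IsKernel P) (hγ0 : 0 ≤ γ) (hγ1 : γ < 1)
    (hρ : IsPolicy ρ) {V W : S → ℝ} (hV : ∀ s, V s ≤ bellman P r γ ρ V s)
    (hW : bellman P r γ ρ W = W) (s : S) : V s ≤ W s := by
  have : Nonempty S := ⟨s⟩
  obtain ⟨m, hm⟩ := Finite.exists_max fun s => V s - W s
  have hcontract : V m - W m ≤ γ * (V m - W m) := by
    have := bellman_sub_bellman_le (r := r) hP hγ0 hρ hm m
    rw [hW] at this
    linarith [hV m]
  have hmax_nonpos : V m - W m ≤ 0 := by nlinarith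
  linarith [hm s]

end Bellman

theorem stmt8_general {S A : Type*} [Fintype S] [Fintype A] [Nonempty A]
    (P : S → A → S → ℝ) (r : S → A → ℝ) (γ : ℝ)
    (hP : IsKernel P)
    (hγ0 : 0 < γ) (hγ1 : γ < 1)
    (φ : (A → ℝ) → ℝ) (hφ : IsLegendre φ)
    (π π' : S → A → ℝ) (hπ : IsRelintPolicy π)
    (Vπ Vπ' : S → ℝ)
    (hVπ : bellman P r γ π Vπ = Vπ)
    (hVπ' : bellman P r γ π' Vπ' = Vπ')
    (η : ℝ) (hη : 0 < η)
    (hupd : PMDStep φ η (Qlook P r γ 1 Vπ) π π') :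
    ∀ s, Vπ s ≤ bellman P r γ π' Vπ s ∧ bellman P r γ π' Vπ s ≤ Vπ' s := by
  have hπ' : IsPolicy π' := fun s => (hupd s).1
  have improve : ∀ s, Vπ s ≤ bellman P r γ π' Vπ s := fun s => by
    have := hupd.sum_mul_le_sum_mul hη hφ.1.convexOn
      (mem_stdSimplex_of_mem_relintSimplex (hπ s)) (hφ.2.1 _ (hπ s))
    rwa [sum_Qlook_one_mul_eq_bellman, sum_Qlook_one_mul_eq_bellman, hVπ] at this
  have hle : ∀ s, Vπ s ≤ Vπ' s := le_of_le_bellman_of_bellman_eq hP hγ0.le hγ1 hπ' improve hVπ'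
  intro s
  refine ⟨improve s, ?_⟩
  have := bellman_sub_bellman_le (r := r) hP hγ0.le hπ' (M := 0) (fun s => sub_nonpos.2 (hle s)) s
  rw [hVπ'] at this
  linarith

/-- monotonic improvement of the PMD update:
if `π'` maximizes the PMD proximal objective for `Q^π`, then componentwise
`V^π ≤ 𝒯^{π'} V^π ≤ V^{π'}`. -/
theorem stmt8 {S A : Type*} [Fintype S] [Nonempty S] [Fintype A] [Nonempty A]
    (P : S → A → S → ℝ) (r : S → A → ℝ) (γ : ℝ)
    (hP : IsKernel P) (hr : ∀ s a, 0 ≤ r s a ∧ r s a ≤ 1)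
    (hγ0 : 0 < γ) (hγ1 : γ < 1)
    (φ : (A → ℝ) → ℝ) (hφ : IsLegendre φ)
    (π π' : S → A → ℝ) (hπ : IsRelintPolicy π)
    (Vπ Vπ' : S → ℝ)
    (hVπ : bellman P r γ π Vπ = Vπ)
    (hVπ' : bellman P r γ π' Vπ' = Vπ')
    (η : ℝ) (hη : 0 < η)
    (hupd : PMDStep φ η (Qlook P r γ 1 Vπ) π π') :
    ∀ s, Vπ s ≤ bellman P r γ π' Vπ s ∧ bellman P r γ π' Vπ s ≤ Vπ' s :=
  stmt8_general P r γ hP hγ0 hγ1 φ hφ π π' hπ Vπ Vπ' hVπ hVπ' η hη hupd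
end
end

section
/- Least-squares extrapolation bound under a Kiefer–Wolfowitz design: let 𝒵 be a finite set, d ≥ 1, ψ : 𝒵 → ℝ^d a feature map, 𝒞 ⊆ 𝒵, and ρ : 𝒞 → [0,1] a probability distribution (Σ_{z∈𝒞} ρ(z) = 1) such that the matrix G_ρ := Σ_{z∈𝒞} ρ(z) ψ(z) ψ(z)ᵀ is nonsingular and ψ(z)ᵀ G_ρ^{−1} ψ(z) ≤ d for every z ∈ 𝒵. Let Q : 𝒵 → ℝ and θ ∈ ℝ^d satisfy max_{z∈𝒵} |Q(z) − ψ(z)ᵀθ| ≤ ε_π, and let targets R̂ : 𝒞 → ℝ satisfy |R̂(z) − Q(z)| ≤ ε_Q for all z ∈ 𝒞. Then the weighted least-squares estimator θ̂ := G_ρ^{−1} Σ_{z∈𝒞} ρ(z) R̂(z) ψ(z) satisfies max_{z∈𝒵} |Q(z) − ψ(z)ᵀθ̂| ≤ ε_π (1 + √d) + √d · ε_Q. -/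
open Finset

noncomputable section

open Matrix

/-- least-squares extrapolation bound under a Kiefer–Wolfowitz design:
if `G_ρ` is nonsingular, `ψ(z)ᵀ G_ρ⁻¹ ψ(z) ≤ d` for all `z`, `|Q(z) − ψ(z)ᵀθ| ≤ ε_π` on `𝒵`
and `|R̂(z) − Q(z)| ≤ ε_Q` on `𝒞`, then the weighted least-squares estimator
`θ̂ = G_ρ⁻¹ Σ_{z∈𝒞} ρ(z) R̂(z) ψ(z)` satisfies
`max_z |Q(z) − ψ(z)ᵀθ̂| ≤ ε_π (1 + √d) + √d ε_Q`. -/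
theorem stmt18 {Z : Type*} [Fintype Z] [Nonempty Z] {d : ℕ} (hd : 1 ≤ d)
    (ψ : Z → Fin d → ℝ) (C : Finset Z) (ρ : Z → ℝ)
    (hρ0 : ∀ z ∈ C, 0 ≤ ρ z) (hρ1 : ∑ z ∈ C, ρ z = 1)
    (G : Matrix (Fin d) (Fin d) ℝ)
    (hG : G = ∑ z ∈ C, ρ z • Matrix.vecMulVec (ψ z) (ψ z))
    (hGdet : IsUnit G.det)
    (hKW : ∀ z : Z, ∑ i, ψ z i * Matrix.mulVec G⁻¹ (ψ z) i ≤ (d : ℝ))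
    (Q : Z → ℝ) (θ : Fin d → ℝ) (επ : ℝ)
    (hreal : ∀ z : Z, |Q z - ∑ i, ψ z i * θ i| ≤ επ)
    (Rhat : Z → ℝ) (εQ : ℝ)
    (htar : ∀ z ∈ C, |Rhat z - Q z| ≤ εQ)
    (θhat : Fin d → ℝ)
    (hθhat : θhat = Matrix.mulVec G⁻¹ (∑ z ∈ C, (ρ z * Rhat z) • ψ z)) :
    ∀ z : Z, |Q z - ∑ i, ψ z i * θhat i| ≤
      επ * (1 + Real.sqrt d) + Real.sqrt d * εQ := by
  classical
  have hεπ : 0 ≤ επ := le_trans (abs_nonneg _) (hreal (Classical.arbitrary Z))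
  have hεQ : 0 ≤ εQ := by
    have hCne : C.Nonempty := by
      by_contra h
      rw [Finset.not_nonempty_iff_eq_empty] at h
      simp [h] at hρ1
    obtain ⟨w, hw⟩ := hCne
    exact le_trans (abs_nonneg _) (htar w hw)
  -- symmetry
  have hGt : Gᵀ = G := by
    rw [hG, Matrix.transpose_sum]
    refine Finset.sum_congr rfl fun w _ => ?_
    ext i j
    simp [Matrix.vecMulVec_apply, mul_comm]
  have hGsymm : G⁻¹ᵀ = G⁻¹ := by
    rw [Matrix.transpose_nonsing_inv, hGt]
  have hGv : ∀ v : Fin d → ℝ, Matrix.mulVec G v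
      = fun i => ∑ w ∈ C, ρ w * (∑ j, ψ w j * v j) * ψ w i := by
    intro v
    ext i
    rw [hG]
    simp only [Matrix.mulVec, dotProduct, Matrix.sum_apply, Matrix.smul_apply,
      Matrix.vecMulVec_apply, smul_eq_mul, Finset.sum_mul, Finset.mul_sum]
    rw [Finset.sum_comm]
    exact Finset.sum_congr rfl fun w _ => Finset.sum_congr rfl fun j _ => by ring
  intro z
  set u : Fin d → ℝ := Matrix.mulVec G⁻¹ (ψ z) with hu
  have hdot : ∀ v : Fin d → ℝ, ψ z ⬝ᵥ Matrix.mulVec G⁻¹ v = u ⬝ᵥ v := by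
    intro v
    rw [Matrix.dotProduct_mulVec]
    congr 1
    rw [← hGsymm, Matrix.vecMul_transpose]
  set a : Z → ℝ := fun w => u ⬝ᵥ ψ w with ha
  -- S1
  have S1 : (∑ i, ψ z i * θhat i) = ∑ w ∈ C, ρ w * Rhat w * a w := by
    have : (∑ i, ψ z i * θhat i) = ψ z ⬝ᵥ θhat := rfl
    rw [this, hθhat, hdot]
    simp only [dotProduct, ha, Finset.sum_apply, Pi.smul_apply, smul_eq_mul,
      Finset.mul_sum, Finset.sum_mul]
    rw [Finset.sum_comm]
    exact Finset.sum_congr rfl fun w _ => Finset.sum_congr rfl fun j _ => by ring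
  -- S2
  have S2 : (∑ i, ψ z i * θ i) = ∑ w ∈ C, ρ w * (∑ j, ψ w j * θ j) * a w := by
    have hθ : θ = Matrix.mulVec G⁻¹ (Matrix.mulVec G θ) := by
      rw [Matrix.mulVec_mulVec, Matrix.nonsing_inv_mul G hGdet, Matrix.one_mulVec]
    calc (∑ i, ψ z i * θ i) = ψ z ⬝ᵥ θ := rfl
      _ = ψ z ⬝ᵥ Matrix.mulVec G⁻¹ (Matrix.mulVec G θ) := by rw [← hθ]
      _ = u ⬝ᵥ Matrix.mulVec G θ := hdot _
      _ = ∑ w ∈ C, ρ w * (∑ j, ψ w j * θ j) * a w := by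
          rw [hGv]
          simp only [dotProduct, ha, Finset.mul_sum, Finset.sum_mul]
          rw [Finset.sum_comm]
          refine Finset.sum_congr rfl fun w _ => ?_
          refine Finset.sum_congr rfl fun j _ => ?_
          exact Finset.sum_congr rfl fun x _ => by ring
  -- S3
  have S3 : (∑ w ∈ C, ρ w * (a w) ^ 2) = ψ z ⬝ᵥ u := by
    have hGu : Matrix.mulVec G u = ψ z := by
      rw [hu, Matrix.mulVec_mulVec, Matrix.mul_nonsing_inv G hGdet, Matrix.one_mulVec]
    have h1 : u ⬝ᵥ Matrix.mulVec G u = ∑ w ∈ C, ρ w * (a w) ^ 2 := by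
      rw [hGv]
      simp only [dotProduct, Finset.mul_sum]
      rw [Finset.sum_comm]
      refine Finset.sum_congr rfl fun w _ => ?_
      have hcomm : (∑ i, ρ w * (ψ w i * u i)) = ρ w * a w := by
        have h' : ρ w * a w = ∑ i, ρ w * (u i * ψ w i) := by
          rw [show a w = ∑ i, u i * ψ w i from rfl, Finset.mul_sum]
        rw [h']
        exact Finset.sum_congr rfl fun i _ => by ring
      rw [hcomm]
      simp only [mul_assoc]
      calc (∑ i, u i * (ρ w * (a w * ψ w i))) = ρ w * a w * ∑ i, u i * ψ w i := by
            rw [Finset.mul_sum]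
            exact Finset.sum_congr rfl fun i _ => by ring
        _ = ρ w * a w ^ 2 := by
            rw [show (∑ i, u i * ψ w i) = a w from rfl]; ring
    rw [← h1, hGu, dotProduct_comm]
  have hS3d : (∑ w ∈ C, ρ w * (a w) ^ 2) ≤ (d : ℝ) := by
    rw [S3]; exact hKW z
  -- Cauchy-Schwarz
  have hsum_nonneg : 0 ≤ ∑ w ∈ C, ρ w * |a w| :=
    Finset.sum_nonneg fun w hw => mul_nonneg (hρ0 w hw) (abs_nonneg _)
  have hCS : (∑ w ∈ C, ρ w * |a w|) ≤ Real.sqrt d := by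
    have h2 : (∑ w ∈ C, ρ w * |a w|) ^ 2 ≤ (∑ w ∈ C, ρ w) * ∑ w ∈ C, ρ w * (a w) ^ 2 := by
      have := Finset.sum_mul_sq_le_sq_mul_sq C (fun w => Real.sqrt (ρ w))
        (fun w => Real.sqrt (ρ w) * |a w|)
      calc (∑ w ∈ C, ρ w * |a w|) ^ 2
          = (∑ w ∈ C, Real.sqrt (ρ w) * (Real.sqrt (ρ w) * |a w|)) ^ 2 := by
            congr 1
            refine Finset.sum_congr rfl fun w hw => ?_
            rw [← mul_assoc, Real.mul_self_sqrt (hρ0 w hw)]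
        _ ≤ (∑ w ∈ C, Real.sqrt (ρ w) ^ 2) * ∑ w ∈ C, (Real.sqrt (ρ w) * |a w|) ^ 2 := this
        _ = (∑ w ∈ C, ρ w) * ∑ w ∈ C, ρ w * (a w) ^ 2 := by
            congr 1
            · exact Finset.sum_congr rfl fun w hw => Real.sq_sqrt (hρ0 w hw)
            · refine Finset.sum_congr rfl fun w hw => ?_
              rw [mul_pow, Real.sq_sqrt (hρ0 w hw), sq_abs]
    rw [hρ1, one_mul] at h2
    have := h2.trans hS3d
    calc (∑ w ∈ C, ρ w * |a w|) = Real.sqrt ((∑ w ∈ C, ρ w * |a w|) ^ 2) :=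
        (Real.sqrt_sq hsum_nonneg).symm
      _ ≤ Real.sqrt d := Real.sqrt_le_sqrt this
  -- main bound
  have key : |∑ w ∈ C, ρ w * (Rhat w - ∑ j, ψ w j * θ j) * a w| ≤ (επ + εQ) * Real.sqrt d := by
    calc |∑ w ∈ C, ρ w * (Rhat w - ∑ j, ψ w j * θ j) * a w|
        ≤ ∑ w ∈ C, |ρ w * (Rhat w - ∑ j, ψ w j * θ j) * a w| := Finset.abs_sum_le_sum_abs _ _
      _ ≤ ∑ w ∈ C, (επ + εQ) * (ρ w * |a w|) := by
          refine Finset.sum_le_sum fun w hw => ?_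
          rw [abs_mul, abs_mul, abs_of_nonneg (hρ0 w hw)]
          have hb : |Rhat w - ∑ j, ψ w j * θ j| ≤ επ + εQ := by
            have h1 := htar w hw
            have h2 := hreal w
            calc |Rhat w - ∑ j, ψ w j * θ j|
                = |(Rhat w - Q w) + (Q w - ∑ j, ψ w j * θ j)| := by ring_nf
              _ ≤ |Rhat w - Q w| + |Q w - ∑ j, ψ w j * θ j| := abs_add_le _ _
              _ ≤ επ + εQ := by linarith
          calc ρ w * |Rhat w - ∑ j, ψ w j * θ j| * |a w|
              ≤ ρ w * (επ + εQ) * |a w| := by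
                apply mul_le_mul_of_nonneg_right _ (abs_nonneg _)
                exact mul_le_mul_of_nonneg_left hb (hρ0 w hw)
            _ = (επ + εQ) * (ρ w * |a w|) := by ring
      _ = (επ + εQ) * ∑ w ∈ C, ρ w * |a w| := by rw [← Finset.mul_sum]
      _ ≤ (επ + εQ) * Real.sqrt d := by
          apply mul_le_mul_of_nonneg_left hCS (by linarith)
  have hdiff : (∑ i, ψ z i * θhat i) - (∑ i, ψ z i * θ i)
      = ∑ w ∈ C, ρ w * (Rhat w - ∑ j, ψ w j * θ j) * a w := by
    rw [S1, S2, ← Finset.sum_sub_distrib]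
    exact Finset.sum_congr rfl fun w _ => by ring
  have h1 := hreal z
  have habs : |Q z - ∑ i, ψ z i * θhat i|
      ≤ |Q z - ∑ i, ψ z i * θ i| + |∑ w ∈ C, ρ w * (Rhat w - ∑ j, ψ w j * θ j) * a w| := by
    calc |Q z - ∑ i, ψ z i * θhat i|
        = |(Q z - ∑ i, ψ z i * θ i) - ((∑ i, ψ z i * θhat i) - (∑ i, ψ z i * θ i))| := by
          ring_nf
      _ ≤ |Q z - ∑ i, ψ z i * θ i| + |(∑ i, ψ z i * θhat i) - (∑ i, ψ z i * θ i)| :=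
          abs_sub _ _
      _ = _ := by rw [hdiff]
  have hfinal : |Q z - ∑ i, ψ z i * θhat i| ≤ επ + (επ + εQ) * Real.sqrt d := by
    linarith
  have : επ + (επ + εQ) * Real.sqrt d = επ * (1 + Real.sqrt d) + Real.sqrt d * εQ := by ring
  linarith
end
end
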